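/- For a subset Ω of D and positive integer n, the ring Int^{n-1}(Ω, D) of polynomials f ∈ K[X] whose divided differences Φ^k(f) of order k ≤ n-1 map Ω^{k+1} into D equals the intersection of the pullbacks D(q) = D[X] + q·K[X], as q ranges over all monic polynomials of degree n over D whose roots all lie in Ω. -/

import Mathlib

/-!
With `N_m = ∏_{i<m} (X - a_i)`, the remainders of `f` satisfy Newton's recursion
`f mod N_{m+1} = f mod N_m + Φ^m(f)(a_0, …, a_m) · N_m`, and for monic `q ∈ D[X]` we have
`f ∈ D(q)` iff `f mod q ∈ D[X]`. So integral divided differences along `a_0, …, a_{n-1}` give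
`f ∈ D(N_n)`. Conversely, pad `k + 1 ≤ n` nodes to `n` by repeating the last one: then
`D(N_n) ⊆ D(N_{k+1})`, and `Φ^k(f)` is the top coefficient of `f mod N_{k+1} ∈ D[X]`.
-/

open Polynomial

variable (D : Type*) [CommRing D] [IsDomain D]

noncomputable abbrev K := FractionRing D

/-- The pullback `D(p) = D[X] + p·K[X]` as a subring of `K[X]`. -/
noncomputable def Dp (p : D[X]) : Subring (Polynomial (K D)) where
  carrier := {f | ∃ r : D[X], ∃ q : Polynomial (K D),
    f = r.map (algebraMap D (K D)) + p.map (algebraMap D (K D)) * q}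
  zero_mem' := ⟨0, 0, by simp⟩
  one_mem' := ⟨1, 0, by simp⟩
  add_mem' := by
    rintro a b ⟨r1, q1, rfl⟩ ⟨r2, q2, rfl⟩
    exact ⟨r1 + r2, q1 + q2, by push_cast [Polynomial.map_add]; ring⟩
  mul_mem' := by
    rintro a b ⟨r1, q1, rfl⟩ ⟨r2, q2, rfl⟩
    exact ⟨r1 * r2, r1.map (algebraMap D (K D)) * q2 + q1 * (r2.map (algebraMap D (K D)))
      + p.map (algebraMap D (K D)) * q1 * q2, by push_cast [Polynomial.map_mul]; ring⟩
  neg_mem' := by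
    rintro a ⟨r, q, rfl⟩
    exact ⟨-r, -q, by push_cast [Polynomial.map_neg]; ring⟩

/-- The `k`-th divided difference `Φ^k(f)(a 0, …, a k)` of a polynomial `f`, defined (in a way
valid also for repeated nodes) as the coefficient of `X^k` in the remainder of the division of
`f` by `∏ i, (X - a i)`; for pairwise distinct nodes this agrees with the recursive definition
`Φ^k(f)(X_0,…,X_k) = (Φ^{k-1}(f)(X_0,…,X_{k-1}) - Φ^{k-1}(f)(X_0,…,X_{k-2},X_k))/(X_{k-1}-X_k)`. -/
noncomputable def divDiff {L : Type*} [Field L] (k : ℕ) (f : Polynomial L)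
    (a : Fin (k + 1) → L) : L :=
  (f %ₘ ∏ i, (X - C (a i))).coeff k

namespace Polynomial

section CommRing

variable {R : Type*} [CommRing R]

lemma modByMonic_modByMonic_of_dvd {p q : R[X]} (f : R[X]) (hp : p.Monic) (hpq : p ∣ q) :
    (f %ₘ q) %ₘ p = f %ₘ p :=
  modByMonic_eq_of_dvd_sub hp (hpq.trans (dvd_modByMonic_sub f q))

lemma eq_modByMonic_add_C_coeff_mul [Nontrivial R] {p g : R[X]} (hp : p.Monic)
    (hg : g.natDegree ≤ p.natDegree) :
    g = g %ₘ p + C (g.coeff p.natDegree) * p := by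
  set c := g.coeff p.natDegree
  have hlt : (g - C c * p).degree < p.degree := by
    rw [degree_eq_natDegree hp.ne_zero, degree_lt_iff_coeff_zero]
    intro m hm
    rw [coeff_sub, coeff_C_mul]
    rcases hm.eq_or_lt with rfl | hpm
    · rw [hp.coeff_natDegree, mul_one, sub_self]
    · rw [coeff_eq_zero_of_natDegree_lt (hg.trans_lt hpm), coeff_eq_zero_of_natDegree_lt hpm,
        mul_zero, sub_zero]
  have hmod : g %ₘ p = g - C c * p := by
    rw [modByMonic_eq_of_dvd_sub hp (dvd_mul_left p (C c) |>.trans (by rw [sub_sub_cancel])),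
      (modByMonic_eq_self_iff hp).2 hlt]
  rw [hmod, sub_add_cancel]

lemma modByMonic_prod_range_succ [Nontrivial R] (f : R[X]) (b : ℕ → R) (m : ℕ) :
    f %ₘ ∏ i ∈ Finset.range (m + 1), (X - C (b i)) =
      f %ₘ ∏ i ∈ Finset.range m, (X - C (b i)) +
        C ((f %ₘ ∏ i ∈ Finset.range (m + 1), (X - C (b i))).coeff m) *
          ∏ i ∈ Finset.range m, (X - C (b i)) := by
  set N : ℕ → R[X] := fun m => ∏ i ∈ Finset.range m, (X - C (b i))
  have hN : ∀ m, (N m).Monic := fun m => monic_prod_X_sub_C b _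
  have hdeg : ∀ m, (N m).natDegree = m := by simp [N]
  have hg : (f %ₘ N (m + 1)).natDegree ≤ (N m).natDegree := by
    have hlt := natDegree_modByMonic_lt f (hN (m + 1)) fun h => by simpa [h] using hdeg (m + 1)
    rw [hdeg] at hlt ⊢
    omega
  conv_lhs => rw [eq_modByMonic_add_C_coeff_mul (hN m) hg]
  rw [modByMonic_modByMonic_of_dvd f (hN m)
    (Finset.prod_dvd_prod_of_subset _ _ _ (Finset.range_subset_range.2 m.le_succ)), hdeg]

variable {S : Type*} [CommRing S] [Nontrivial S]

lemma modByMonic_prod_range_mem_lifts (φ : R →+* S) {f : S[X]} {a : ℕ → R} {n : ℕ}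
    (h : ∀ m < n, (f %ₘ ∏ i ∈ Finset.range (m + 1), (X - C (φ (a i)))).coeff m ∈ Set.range φ) :
    f %ₘ ∏ i ∈ Finset.range n, (X - C (φ (a i))) ∈ lifts φ := by
  induction n with
  | zero => simp [modByMonic_one]
  | succ m ih =>
    rw [modByMonic_prod_range_succ]
    refine add_mem (ih fun k hk => h k (by omega)) (mul_mem (C'_mem_lifts (h m m.lt_succ_self))
      (prod_mem fun i _ => (mem_lifts _).2 ⟨X - C (a i), by simp⟩))

end CommRing

end Polynomial

lemma divDiff_eq_coeff_modByMonic {L : Type*} [Field L] (k : ℕ) (f : L[X]) (b : ℕ → L) :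
    divDiff k f (fun i => b i) = (f %ₘ ∏ i ∈ Finset.range (k + 1), (X - C (b i))).coeff k := by
  rw [divDiff, Fin.prod_univ_eq_prod_range (fun i => X - C (b i))]

variable {D}

omit [IsDomain D] in
lemma mem_Dp_iff_modByMonic_mem_lifts {p : D[X]} (hp : p.Monic) (f : Polynomial (K D)) :
    f ∈ Dp D p ↔ f %ₘ p.map (algebraMap D (K D)) ∈ lifts (algebraMap D (K D)) := by
  constructor
  · rintro ⟨r, s, rfl⟩
    rw [add_modByMonic, self_mul_modByMonic (hp.map _), add_zero, ← map_modByMonic _ hp]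
    exact (mem_lifts _).2 ⟨_, rfl⟩
  · intro hf
    obtain ⟨r, hr⟩ := (mem_lifts _).1 hf
    exact ⟨r, f /ₘ p.map (algebraMap D (K D)), by rw [hr, modByMonic_add_div]⟩

omit [IsDomain D] in
lemma Dp_le_of_dvd {p q : D[X]} (h : p ∣ q) : Dp D q ≤ Dp D p := by
  rintro f ⟨r, s, rfl⟩
  obtain ⟨c, rfl⟩ := h
  exact ⟨r, c.map (algebraMap D (K D)) * s, by rw [Polynomial.map_mul, mul_assoc]⟩

theorem int_divDiff_eq_iInter_Dp_general (Ω : Set D) (n : ℕ) :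
    {f : Polynomial (K D) | ∀ k < n, ∀ a : Fin (k + 1) → D, (∀ i, a i ∈ Ω) →
        ∃ d : D, divDiff k f (fun i => algebraMap D (K D) (a i)) = algebraMap D (K D) d} =
      ⋂ q ∈ {q : D[X] | ∃ a : ℕ → D, (∀ i < n, a i ∈ Ω) ∧
        q = ∏ i ∈ Finset.range n, (X - C (a i))}, (Dp D q : Set (Polynomial (K D))) := by
  ext f
  simp only [Set.mem_ofPred_eq, Set.mem_iInter, SetLike.mem_coe]
  constructor
  · rintro hf _ ⟨a, ha, rfl⟩
    rw [mem_Dp_iff_modByMonic_mem_lifts (monic_prod_X_sub_C _ _), Polynomial.map_prod]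
    simp only [Polynomial.map_sub, map_X, map_C]
    refine modByMonic_prod_range_mem_lifts _ fun m hm => ?_
    obtain ⟨d, hd⟩ := hf m hm (fun i => a i) fun i => ha i (by omega)
    exact ⟨d, by rw [← hd, divDiff_eq_coeff_modByMonic m f fun i => algebraMap D (K D) (a i)]⟩
  · intro hf k hk a ha
    set a' : ℕ → D := fun i => a (Fin.clamp i k)
    have hmem := Dp_le_of_dvd (Finset.prod_dvd_prod_of_subset _ _ _
      (Finset.range_subset_range.2 hk)) (hf _ ⟨a', fun i _ => ha _, rfl⟩)
    rw [mem_Dp_iff_modByMonic_mem_lifts (monic_prod_X_sub_C _ _), lifts_iff_coeff_lifts] at hmem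
    obtain ⟨d, hd⟩ := hmem k
    have ha' : (fun i : Fin (k + 1) => algebraMap D (K D) (a i)) =
        fun i : Fin (k + 1) => algebraMap D (K D) (a' i) :=
      funext fun i => congrArg _ (congrArg a (Fin.ext (min_eq_left (Nat.le_of_lt_succ i.2)).symm))
    refine ⟨d, ?_⟩
    rw [ha', divDiff_eq_coeff_modByMonic k f fun i => algebraMap D (K D) (a' i), hd,
      Polynomial.map_prod]
    simp only [Polynomial.map_sub, map_X, map_C]

/-- For `Ω ⊆ D` and `n > 0`, the ring `Int^{n-1}(Ω, D)` of polynomials in `K[X]` whose divided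
differences of order `≤ n-1` are integer-valued on `Ω` equals the intersection of the pullbacks
`D(q)`, as `q` ranges over monic degree-`n` polynomials split over `D` with all roots in `Ω`. -/
theorem int_divDiff_eq_iInter_Dp (Ω : Set D) (n : ℕ) (hn : 0 < n) :
    {f : Polynomial (K D) | ∀ k < n, ∀ a : Fin (k + 1) → D, (∀ i, a i ∈ Ω) →
        ∃ d : D, divDiff k f (fun i => algebraMap D (K D) (a i)) = algebraMap D (K D) d} =
      ⋂ q ∈ {q : D[X] | ∃ a : ℕ → D, (∀ i < n, a i ∈ Ω) ∧
        q = ∏ i ∈ Finset.range n, (X - C (a i))}, (Dp D q : Set (Polynomial (K D))) :=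
  int_divDiff_eq_iInter_Dp_general Ω n
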